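/- arXiv:2112.07298 — 2 statements merged into one kernel-verified Lean document; each statement's English description precedes it below -/
import Mathlib

section
/- For a Tychonoff space X, the space C(X,ℝ) with the topology of uniform convergence on X (sup-metric topology) is a topological ring under pointwise operations if and only if X is pseudocompact. -/
def uniformConvAll (X Y : Type*) [TopologicalSpace X] [UniformSpace Y] :
    UniformSpace C(X, Y) :=
  UniformSpace.comap (fun h : C(X, Y) => UniformFun.ofFun ⇑h)
    (UniformFun.uniformSpace X Y)

def Pseudocompact (X : Type*) [TopologicalSpace X] : Prop :=
  ∀ f : C(X, ℝ), ∃ M : ℝ, ∀ x : X, |f x| ≤ M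

section Aux
variable {X : Type*} [TopologicalSpace X]

lemma uniformConvAll_hasBasis :
    (@uniformity C(X,ℝ) (uniformConvAll X ℝ)).HasBasis (fun ε : ℝ => 0 < ε)
      (fun ε => {p : C(X,ℝ) × C(X,ℝ) | ∀ x, dist (p.1 x) (p.2 x) < ε}) := by
  have h := UniformFun.hasBasis_uniformity_of_basis X ℝ Metric.uniformity_basis_dist
  have h2 := h.comap (Prod.map (fun h : C(X,ℝ) => UniformFun.ofFun ⇑h)
      (fun h : C(X,ℝ) => UniformFun.ofFun ⇑h))
  have : (@uniformity C(X,ℝ) (uniformConvAll X ℝ)) =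
      Filter.comap (Prod.map (fun h : C(X,ℝ) => UniformFun.ofFun ⇑h)
        (fun h : C(X,ℝ) => UniformFun.ofFun ⇑h)) (uniformity (UniformFun X ℝ)) := rfl
  rw [this]
  exact h2.to_hasBasis (fun ε hε => ⟨ε, hε, fun p hp => hp⟩)
    (fun ε hε => ⟨ε, hε, fun p hp => hp⟩)

lemma uniformConvAll_nhds_basis (f : C(X,ℝ)) :
    (@nhds C(X,ℝ) (uniformConvAll X ℝ).toTopologicalSpace f).HasBasis (fun ε : ℝ => 0 < ε)
      (fun ε => {g | ∀ x, dist (f x) (g x) < ε}) := by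
  letI := uniformConvAll X ℝ
  rw [nhds_eq_comap_uniformity]
  exact (uniformConvAll_hasBasis.comap _).to_hasBasis
    (fun ε hε => ⟨ε, hε, fun g hg => hg⟩) (fun ε hε => ⟨ε, hε, fun g hg => hg⟩)

/-- Characterization of continuity at a point for binary operations, w.r.t. the uniform
convergence topology on both sides. -/
lemma uniformConvAll_tendsto_iff (op : C(X,ℝ) × C(X,ℝ) → C(X,ℝ)) (f g : C(X,ℝ)) :
    Filter.Tendsto op
      ((@nhds C(X,ℝ) (uniformConvAll X ℝ).toTopologicalSpace f) ×ˢ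
        (@nhds C(X,ℝ) (uniformConvAll X ℝ).toTopologicalSpace g))
      (@nhds C(X,ℝ) (uniformConvAll X ℝ).toTopologicalSpace (op (f, g))) ↔
    ∀ ε > (0:ℝ), ∃ δ : ℝ × ℝ, (0 < δ.1 ∧ 0 < δ.2) ∧ ∀ p : C(X,ℝ) × C(X,ℝ),
      ((∀ x, dist (f x) (p.1 x) < δ.1) ∧ (∀ x, dist (g x) (p.2 x) < δ.2)) →
      ∀ x, dist (op (f,g) x) (op p x) < ε :=
  ((uniformConvAll_nhds_basis f).prod (uniformConvAll_nhds_basis g)).tendsto_iff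
    (uniformConvAll_nhds_basis (op (f, g)))

end Aux

theorem supTopology_topologicalRing_iff_pseudocompact (X : Type*)
    [TopologicalSpace X] [T35Space X] :
    @IsTopologicalRing C(X, ℝ) (uniformConvAll X ℝ).toTopologicalSpace inferInstance ↔
      Pseudocompact X := by
  set τ : TopologicalSpace C(X,ℝ) := (uniformConvAll X ℝ).toTopologicalSpace with hτ
  constructor
  · -- topological ring → pseudocompact
    intro hTR f
    by_contra hub
    push_neg at hub
    have hmul := hTR.toIsTopologicalSemiring.toContinuousMul.continuous_mul
    have h := @Continuous.tendsto _ _ (@instTopologicalSpaceProd _ _ τ τ) τ _ hmul (f, f)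
    rw [@nhds_prod_eq _ _ τ τ] at h
    rw [show ((f,f).1 * (f,f).2) = (fun p : C(X,ℝ)×C(X,ℝ) => p.1*p.2) (f,f) from rfl,
      uniformConvAll_tendsto_iff] at h
    obtain ⟨⟨δ₁, δ₂⟩, ⟨hδ₁, hδ₂⟩, hδ⟩ := h 1 one_pos
    set δ := min δ₁ δ₂ with hδdef
    have hδpos : 0 < δ := lt_min hδ₁ hδ₂
    obtain ⟨x, hx⟩ := hub (2 / δ)
    have hkey := hδ (f + ContinuousMap.const X (δ/2), f)
      ⟨fun y => by
        simp only [ContinuousMap.add_apply, ContinuousMap.const_apply, Real.dist_eq]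
        rw [show f y - (f y + δ/2) = -(δ/2) by ring, abs_neg, abs_of_pos (half_pos hδpos)]
        calc δ/2 < δ := half_lt_self hδpos
          _ ≤ δ₁ := min_le_left _ _,
       fun y => by simpa using lt_of_lt_of_le hδpos (min_le_right δ₁ δ₂)⟩
    have hx1 := hkey x
    simp only [ContinuousMap.mul_apply, ContinuousMap.add_apply, ContinuousMap.const_apply,
      Real.dist_eq] at hx1
    have heq : |f x * f x - (f x + δ/2) * f x| = δ/2 * |f x| := by
      rw [show f x * f x - (f x + δ/2) * f x = -(δ/2 * f x) by ring, abs_neg, abs_mul,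
        abs_of_pos (half_pos hδpos)]
    rw [heq] at hx1
    have hlt : |f x| < 2/δ := by
      rw [lt_div_iff₀ hδpos]
      nlinarith
    linarith
  · -- pseudocompact → topological ring
    intro hpc
    have key : ∀ (op : C(X,ℝ) × C(X,ℝ) → C(X,ℝ)),
        (∀ f g : C(X,ℝ), ∀ ε > (0:ℝ), ∃ δ > (0:ℝ), ∀ f' g' : C(X,ℝ),
          (∀ x, dist (f x) (f' x) < δ) → (∀ x, dist (g x) (g' x) < δ) →
          ∀ x, dist (op (f,g) x) (op (f',g') x) < ε) →
        @Continuous _ _ (@instTopologicalSpaceProd _ _ τ τ) τ op := by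
      intro op hop
      rw [@continuous_iff_continuousAt _ _ (@instTopologicalSpaceProd _ _ τ τ) τ]
      rintro ⟨f, g⟩
      unfold ContinuousAt
      rw [@nhds_prod_eq _ _ τ τ, uniformConvAll_tendsto_iff]
      intro ε hε
      obtain ⟨δ, hδ, h⟩ := hop f g ε hε
      exact ⟨(δ, δ), ⟨hδ, hδ⟩, fun p ⟨h1, h2⟩ x => h p.1 p.2 h1 h2 x⟩
    have hadd : @Continuous _ _ (@instTopologicalSpaceProd _ _ τ τ) τ
        (fun p : C(X,ℝ) × C(X,ℝ) => p.1 + p.2) := by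
      apply key
      intro f g ε hε
      refine ⟨ε/2, half_pos hε, fun f' g' h1 h2 x => ?_⟩
      simp only [ContinuousMap.add_apply, Real.dist_eq] at *
      have a1 := h1 x; have a2 := h2 x
      rw [show f x + g x - (f' x + g' x) = (f x - f' x) + (g x - g' x) by ring]
      calc |(f x - f' x) + (g x - g' x)| ≤ |f x - f' x| + |g x - g' x| := abs_add_le _ _
        _ < ε/2 + ε/2 := by gcongr
        _ = ε := by ring
    have hmul : @Continuous _ _ (@instTopologicalSpaceProd _ _ τ τ) τ
        (fun p : C(X,ℝ) × C(X,ℝ) => p.1 * p.2) := by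
      apply key
      intro f g ε hε
      obtain ⟨Mf, hMf⟩ := hpc f
      obtain ⟨Mg, hMg⟩ := hpc g
      set A : ℝ := max Mf 0 + max Mg 0 + 2 with hA
      have hApos : 0 < A := by positivity
      set δ : ℝ := min 1 (ε / A) with hδdef
      have hδpos : 0 < δ := lt_min one_pos (div_pos hε hApos)
      have hδ1 : δ ≤ 1 := min_le_left _ _
      have hδ2 : δ ≤ ε / A := min_le_right _ _
      refine ⟨δ, hδpos, fun f' g' h1 h2 x => ?_⟩
      simp only [ContinuousMap.mul_apply, Real.dist_eq]
      have a1 := h1 x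
      have a2 := h2 x
      simp only [Real.dist_eq] at a1 a2
      have hfx : |f x| ≤ max Mf 0 := le_trans (hMf x) (le_max_left _ _)
      have hgx : |g x| ≤ max Mg 0 := le_trans (hMg x) (le_max_left _ _)
      have hg'x : |g' x| ≤ max Mg 0 + 1 := by
        have t1 := abs_sub_abs_le_abs_sub (g' x) (g x)
        rw [abs_sub_comm] at t1
        linarith
      calc |f x * g x - f' x * g' x|
          = |f x * (g x - g' x) + g' x * (f x - f' x)| := by
            rw [show f x * g x - f' x * g' x
              = f x * (g x - g' x) + g' x * (f x - f' x) by ring]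
        _ ≤ |f x| * |g x - g' x| + |g' x| * |f x - f' x| :=
            le_trans (abs_add_le _ _) (le_of_eq (by rw [abs_mul, abs_mul]))
        _ ≤ (max Mf 0) * δ + (max Mg 0 + 1) * δ := by
            have hb1 : |g x - g' x| ≤ δ := le_of_lt a2
            have hb2 : |f x - f' x| ≤ δ := le_of_lt a1
            have hMg0 : (0:ℝ) ≤ max Mg 0 := le_max_right _ _
            have hfx0 : (0:ℝ) ≤ |f x| := abs_nonneg _
            gcongr
        _ = (A - 1) * δ := by rw [hA]; ring
        _ ≤ (A - 1) * (ε / A) := by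
            have : (0:ℝ) ≤ A - 1 := by
              have : (0:ℝ) ≤ max Mf 0 := le_max_right _ _
              have : (0:ℝ) ≤ max Mg 0 := le_max_right _ _
              rw [hA]; linarith
            exact mul_le_mul_of_nonneg_left hδ2 this
        _ < ε := by
            have h0 : (A - 1) * (ε / A) = ε - ε / A := by
              field_simp
            have h1' : 0 < ε / A := div_pos hε hApos
            linarith
    have hneg : @Continuous _ _ τ τ (fun f : C(X,ℝ) => -f) := by
      rw [@continuous_iff_continuousAt _ _ τ τ]
      intro f
      unfold ContinuousAt
      rw [(uniformConvAll_nhds_basis f).tendsto_iff (uniformConvAll_nhds_basis (-f))]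
      intro ε hε
      refine ⟨ε, hε, fun g hg x => ?_⟩
      simpa [Real.dist_eq, abs_sub_comm, show -f x - -g x = -(f x - g x) by ring] using hg x
    exact @IsTopologicalRing.mk _ τ _ (@IsTopologicalSemiring.mk _ τ _ ⟨hadd⟩ ⟨hmul⟩) ⟨hneg⟩
end

section
/- For a topological space X, C(X,ℝ) with the sup-metric topology of uniform convergence is a topological vector space under pointwise operations if and only if X is pseudocompact. -/
open Filter Topology


theorem tendsto_ucs_iff (X : Type*) [TopologicalSpace X] {ι : Type*} (l : Filter ι)
    (F : ι → C(X,ℝ)) (f : C(X,ℝ)) :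
    @Filter.Tendsto _ _ F l (@nhds _ (uniformConvAll X ℝ).toTopologicalSpace f) ↔
      TendstoUniformly (fun i x => F i x) f l := by
  rw [show (uniformConvAll X ℝ).toTopologicalSpace =
      (TopologicalSpace.induced (fun h : C(X,ℝ) => UniformFun.ofFun ⇑h)
        (UniformFun.uniformSpace X ℝ).toTopologicalSpace) from
      UniformSpace.toTopologicalSpace_comap]
  rw [nhds_induced, tendsto_comap_iff]
  exact UniformFun.tendsto_iff_tendstoUniformly

theorem ucs_nhds_mem (X : Type*) [TopologicalSpace X] (f₀ : C(X,ℝ)) {ε : ℝ} (hε : 0 < ε) :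
    {f : C(X,ℝ) | ∀ x, dist (f₀ x) (f x) < ε} ∈
      @nhds _ (uniformConvAll X ℝ).toTopologicalSpace f₀ := by
  have h : TendstoUniformly (fun (f : C(X,ℝ)) x => f x) f₀
      (@nhds _ (uniformConvAll X ℝ).toTopologicalSpace f₀) :=
    (tendsto_ucs_iff X _ id f₀).mp tendsto_id
  exact (Metric.tendstoUniformly_iff.mp h ε hε)

theorem supTopology_tvs_iff_pseudocompact (X : Type*) [TopologicalSpace X] :
    (@IsTopologicalAddGroup C(X, ℝ) (uniformConvAll X ℝ).toTopologicalSpace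
        inferInstance ∧
      @ContinuousSMul ℝ C(X, ℝ) _ _ (uniformConvAll X ℝ).toTopologicalSpace) ↔
    Pseudocompact X := by
  set T := (uniformConvAll X ℝ).toTopologicalSpace with hT
  constructor
  · rintro ⟨-, hsm⟩ f
    have h := hsm.1
    have hpair : Filter.Tendsto (fun c : ℝ => (c, f)) (𝓝 0)
        (@nhds _ (@instTopologicalSpaceProd ℝ C(X,ℝ) _ T) ((0:ℝ), f)) := by
      rw [nhds_prod_eq]
      exact tendsto_id.prodMk tendsto_const_nhds
    have ht : Filter.Tendsto (fun c : ℝ => c • f) (𝓝 0) (@nhds _ T ((0:ℝ) • f)) :=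
      (h.tendsto ((0:ℝ), f)).comp hpair
    rw [zero_smul] at ht
    have htu : TendstoUniformly (fun (c : ℝ) x => (c • f) x) (0 : C(X,ℝ)) (𝓝 0) :=
      (tendsto_ucs_iff X _ _ _).mp ht
    have h1 := Metric.tendstoUniformly_iff.mp htu 1 one_pos
    rw [Metric.eventually_nhds_iff] at h1
    obtain ⟨δ, hδ, hδ'⟩ := h1
    refine ⟨2 / δ, fun x => ?_⟩
    have h2 := hδ' (y := δ/2) (by
      rw [Real.dist_eq, sub_zero, abs_of_pos (by linarith)]; linarith) x
    simp only [ContinuousMap.coe_smul, ContinuousMap.coe_zero, Pi.zero_apply, Pi.smul_apply,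
      smul_eq_mul, Real.dist_eq, zero_sub, abs_neg, abs_mul,
      abs_of_pos (show (0:ℝ) < δ/2 by linarith)] at h2
    rw [le_div_iff₀ hδ]
    nlinarith [abs_nonneg (f x)]
  · intro hps
    constructor
    · refine @IsTopologicalAddGroup.mk _ T _ ⟨?_⟩ ⟨?_⟩
      · -- continuous_add
        rw [continuous_iff_continuousAt]
        rintro ⟨f₀, g₀⟩
        refine (tendsto_ucs_iff X _ _ _).mpr ?_
        rw [Metric.tendstoUniformly_iff]
        intro ε hε
        rw [nhds_prod_eq]
        filter_upwards [Filter.prod_mem_prod (ucs_nhds_mem X f₀ (half_pos hε))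
          (ucs_nhds_mem X g₀ (half_pos hε))] with p hp x
        have h1 := hp.1 x
        have h2 := hp.2 x
        rw [Real.dist_eq] at h1 h2 ⊢
        simp only [ContinuousMap.coe_add, Pi.add_apply]
        calc |(f₀ x + g₀ x) - (p.1 x + p.2 x)| ≤ |f₀ x - p.1 x| + |g₀ x - p.2 x| := by
              rw [show (f₀ x + g₀ x) - (p.1 x + p.2 x) = (f₀ x - p.1 x) + (g₀ x - p.2 x) by ring]
              exact abs_add_le _ _
          _ < ε := by linarith
      · -- continuous_neg
        rw [continuous_iff_continuousAt]
        intro f₀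
        refine (tendsto_ucs_iff X _ _ _).mpr ?_
        rw [Metric.tendstoUniformly_iff]
        intro ε hε
        filter_upwards [ucs_nhds_mem X f₀ hε] with f hf x
        have h1 := hf x
        rw [Real.dist_eq] at h1 ⊢
        simp only [ContinuousMap.coe_neg, Pi.neg_apply]
        rw [show -f₀ x - -f x = -(f₀ x - f x) by ring, abs_neg]
        exact h1
    · refine @ContinuousSMul.mk ℝ _ _ _ T ?_
      rw [continuous_iff_continuousAt]
      rintro ⟨c₀, f₀⟩
      refine (tendsto_ucs_iff X _ _ _).mpr ?_
      rw [Metric.tendstoUniformly_iff]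
      intro ε hε
      obtain ⟨M, hM⟩ := hps f₀
      set N := max M 0 with hN
      have hN0 : 0 ≤ N := le_max_right _ _
      have hMN : ∀ x, |f₀ x| ≤ N := fun x => le_trans (hM x) (le_max_left _ _)
      set δ := min 1 (ε / (N + |c₀| + 2)) with hδdef
      have hden : 0 < N + |c₀| + 2 := by positivity
      have hδpos : 0 < δ := lt_min one_pos (div_pos hε hden)
      have hδ1 : δ ≤ 1 := min_le_left _ _
      have hδ2 : δ ≤ ε / (N + |c₀| + 2) := min_le_right _ _
      rw [nhds_prod_eq]
      filter_upwards [Filter.prod_mem_prod (Metric.ball_mem_nhds c₀ hδpos)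
        (ucs_nhds_mem X f₀ hδpos)] with p hp x
      have h1 : |c₀ - p.1| < δ := by
        have := hp.1; rw [Metric.mem_ball, Real.dist_eq] at this
        rw [abs_sub_comm]; exact this
      have h2 : |f₀ x - p.2 x| < δ := by have := hp.2 x; rwa [Real.dist_eq] at this
      simp only [ContinuousMap.coe_smul, Pi.smul_apply, smul_eq_mul, Real.dist_eq]
      have key : c₀ * f₀ x - p.1 * p.2 x =
          (c₀ - p.1) * f₀ x + p.1 * (f₀ x - p.2 x) := by ring
      rw [key]
      have hp1 : |p.1| ≤ |c₀| + δ := by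
        have := abs_sub_abs_le_abs_sub p.1 c₀
        rw [abs_sub_comm p.1 c₀] at this
        linarith
      calc |(c₀ - p.1) * f₀ x + p.1 * (f₀ x - p.2 x)|
          ≤ |c₀ - p.1| * |f₀ x| + |p.1| * |f₀ x - p.2 x| := by
            refine le_trans (abs_add_le _ _) ?_
            rw [abs_mul, abs_mul]
        _ ≤ δ * N + (|c₀| + δ) * δ := by
            have := hMN x
            have := abs_nonneg (f₀ x)
            have := abs_nonneg p.1
            have := abs_nonneg (f₀ x - p.2 x)
            nlinarith
        _ ≤ δ * (N + |c₀| + 1) := by nlinarith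
        _ < ε := by
            have : δ * (N + |c₀| + 2) ≤ ε := by
              rw [← le_div_iff₀ hden]; exact hδ2
            nlinarith
end
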